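/- arXiv:1410.4230 — 2 statements merged into one kernel-verified Lean document; each statement's English description precedes it below -/
import Mathlib

section
/- Let X be a Montel space, i.e., a barrelled Hausdorff locally convex space in which every bounded subset is relatively compact, with topology induced by a family Γ_X of continuous seminorms, and let (T(t))_{t≥0} be a bounded C₀-semigroup on X (i.e., for every bounded B ⊆ X and q ∈ Γ_X there is C ≥ 0 with sup_{x∈B} q(T(t)x) ≤ C for all t ≥ 0). Then the following are equivalent: (i) for every bounded set B ⊆ X and every q ∈ Γ_X one has lim_{t→∞} sup_{x∈B} q(T(t)x) = 0 (uniform stability); (ii) T(t)x → 0 in X as t → ∞ for every x ∈ X (strong stability). -/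
/-!
Since `X` is barrelled, Banach–Steinhaus makes the pointwise bounded family `T t`, `t ≥ 0`,
equicontinuous: all `Γ i ∘ T t` are dominated by one continuous seminorm `p`. Pointwise convergence
to `0` then becomes uniform on compact sets, by covering the set with finitely many `p`-balls, and in
a Montel space the closure of a bounded set is compact.
-/

open Filter Topology Bornology Set

namespace Seminorm

variable {𝕜 E α : Type*} [NormedField 𝕜] [AddCommGroup E] [Module 𝕜 E] [TopologicalSpace E]

theorem exists_continuous_ge_of_bddAbove [BarrelledSpace 𝕜 E] {r : α → Seminorm 𝕜 E}
    (hr : ∀ a, Continuous (r a)) (hbdd : ∀ x, BddAbove (range fun a ↦ r a x)) :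
    ∃ p : Seminorm 𝕜 E, Continuous p ∧ ∀ a, r a ≤ p := by
  have hbdd' : BddAbove (range r) := Seminorm.bddAbove_range_iff.2 hbdd
  refine ⟨⨆ a, r a, ?_, fun a ↦ le_ciSup hbdd' a⟩
  rw [Seminorm.coe_iSup_eq hbdd']
  exact continuous_iSup r hr hbdd'

theorem eventually_forall_lt_of_tendsto_of_le [IsTopologicalAddGroup E] {l : Filter α}
    {r : α → Seminorm 𝕜 E} {p : Seminorm 𝕜 E} (hp : Continuous p) (hle : ∀ᶠ a in l, r a ≤ p)
    (hr : ∀ x, Tendsto (fun a ↦ r a x) l (𝓝 0)) {K : Set E} (hK : IsCompact K) {ε : ℝ}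
    (hε : 0 < ε) : ∀ᶠ a in l, ∀ y ∈ K, r a y < ε := by
  have hball : ∀ x ∈ K, p.ball x (ε / 2) ∈ 𝓝 x := fun x _ ↦
    (isOpen_lt (hp.comp (continuous_sub_right x)) continuous_const).mem_nhds
      (p.mem_ball_self (half_pos hε))
  obtain ⟨s, hsK, hcover⟩ := hK.elim_nhds_subcover _ hball
  have hcenters : ∀ᶠ a in l, ∀ x ∈ s, r a x < ε / 2 :=
    s.eventually_all.2 fun x _ ↦ (hr x).eventually (gt_mem_nhds (half_pos hε))
  filter_upwards [hle, hcenters] with a hpa hsa y hy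
  obtain ⟨x, hx, hyx⟩ := mem_iUnion₂.1 (hcover hy)
  calc r a y = r a (y - x + x) := by rw [sub_add_cancel]
    _ ≤ r a (y - x) + r a x := map_add_le_add _ _ _
    _ < ε / 2 + ε / 2 := add_lt_add_of_le_of_lt ((hpa _).trans (p.mem_ball.1 hyx).le) (hsa x hx)
    _ = ε := add_halves ε

end Seminorm

theorem statement9_general {X : Type*} [AddCommGroup X] [Module ℝ X] [TopologicalSpace X]
    [BarrelledSpace ℝ X]
    (hMontel : ∀ B : Set X, IsVonNBounded ℝ B → IsCompact (closure B))
    {ι : Type*} (Γ : ι → Seminorm ℝ X) (hΓ : WithSeminorms Γ)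
    (T : ℝ → X →L[ℝ] X)
    (hbdd : ∀ B : Set X, IsVonNBounded ℝ B → ∀ i : ι, ∃ C : ℝ, 0 ≤ C ∧
      ∀ t : ℝ, 0 ≤ t → ∀ x ∈ B, Γ i (T t x) ≤ C) :
    (∀ B : Set X, IsVonNBounded ℝ B → ∀ i : ι, ∀ ε > (0:ℝ),
        ∃ t₀ : ℝ, ∀ t ≥ t₀, ∀ x ∈ B, Γ i (T t x) ≤ ε) ↔
    (∀ x : X, Tendsto (fun t : ℝ => T t x) atTop (nhds 0)) := by
  have := hΓ.topologicalAddGroup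
  have := hΓ.continuousSMul
  constructor
  · intro h x
    refine (hΓ.tendsto_nhds _ 0).2 fun i ε hε ↦ eventually_atTop.2 ?_
    obtain ⟨t₀, ht₀⟩ := h {x} (isVonNBounded_singleton x) i (ε / 2) (half_pos hε)
    exact ⟨t₀, fun t ht ↦ by simpa using (ht₀ t ht x rfl).trans_lt (half_lt_self hε)⟩
  · intro h B hB i ε hε
    let r : ℝ → Seminorm ℝ X := fun t ↦ (Γ i).comp (T t).toLinearMap
    obtain ⟨p, hp, hrp⟩ := Seminorm.exists_continuous_ge_of_bddAbove
      (r := fun t : Ici (0 : ℝ) ↦ r t)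
      (fun t ↦ (hΓ.continuous_seminorm i).comp (T t).continuous) fun x ↦ by
        obtain ⟨C, -, hC⟩ := hbdd {x} (isVonNBounded_singleton x) i
        exact ⟨C, by rintro _ ⟨t, rfl⟩; exact hC t t.2 x rfl⟩
    have hr : ∀ x, Tendsto (fun t ↦ r t x) atTop (𝓝 0) := fun x ↦
      ((hΓ.continuous_seminorm i).tendsto' 0 0 (map_zero _)).comp (h x)
    obtain ⟨t₀, ht₀⟩ := eventually_atTop.1 <| Seminorm.eventually_forall_lt_of_tendsto_of_le hp
      ((eventually_ge_atTop 0).mono fun t ht ↦ hrp ⟨t, ht⟩) hr (hMontel B hB) hε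
    exact ⟨t₀, fun t ht x hx ↦ (ht₀ t ht x (subset_closure hx)).le⟩

/-- Let `X` be a Montel space (barrelled, and every bounded set relatively compact)
and `(T(t))_{t ≥ 0}` a bounded `C₀`-semigroup on `X`. Then uniform stability is equivalent to
strong stability. -/
theorem statement9 {X : Type*} [AddCommGroup X] [Module ℝ X] [TopologicalSpace X]
    [T2Space X] [BarrelledSpace ℝ X]
    (hMontel : ∀ B : Set X, IsVonNBounded ℝ B → IsCompact (closure B))
    {ι : Type*} [Nonempty ι] (Γ : ι → Seminorm ℝ X) (hΓ : WithSeminorms Γ)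
    (T : ℝ → X →L[ℝ] X)
    (hT0 : T 0 = ContinuousLinearMap.id ℝ X)
    (hTsg : ∀ s t : ℝ, 0 ≤ s → 0 ≤ t → T (s + t) = (T s).comp (T t))
    (hTc : ∀ x : X, ContinuousOn (fun t : ℝ => T t x) (Set.Ici 0))
    (hbdd : ∀ B : Set X, IsVonNBounded ℝ B → ∀ i : ι, ∃ C : ℝ, 0 ≤ C ∧
      ∀ t : ℝ, 0 ≤ t → ∀ x ∈ B, Γ i (T t x) ≤ C) :
    (∀ B : Set X, IsVonNBounded ℝ B → ∀ i : ι, ∀ ε > (0:ℝ),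
        ∃ t₀ : ℝ, ∀ t ≥ t₀, ∀ x ∈ B, Γ i (T t x) ≤ ε) ↔
    (∀ x : X, Tendsto (fun t : ℝ => T t x) atTop (nhds 0)) :=
  statement9_general hMontel Γ hΓ T hbdd
end

section
/- Let X be a barrelled Hausdorff locally convex space whose topology is induced by a family Γ_X of continuous seminorms, and let (T(t))_{t≥0} be a C₀-semigroup on X such that lim_{t→∞} sup_{x∈B} q(T(t)x) = 0 for every bounded set B ⊆ X and every q ∈ Γ_X. Then (T(t))_{t≥0} is bounded, i.e., for every bounded set B ⊆ X and every q ∈ Γ_X there exists C ≥ 0 such that sup_{x∈B} q(T(t)x) ≤ C for all t ≥ 0. -/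
/-!
By hypothesis there is `t₀` with `Γ i (T t x) ≤ 1` on `B` for all `t ≥ t₀`. On the compact interval
`[0, t₀]` the orbits are continuous, so the continuous seminorms `x ↦ Γ i (T t x)`, `t ∈ [0, t₀]`,
are pointwise bounded. In a barrelled space their supremum is again a continuous seminorm, and a
continuous seminorm is bounded on every bounded set.
-/

open Bornology

theorem Seminorm.bddAbove_image_of_isVonNBounded {𝕜 E : Type*} [NontriviallyNormedField 𝕜]
    [AddCommGroup E] [Module 𝕜 E] [TopologicalSpace E] {p : Seminorm 𝕜 E} (hp : Continuous p)
    {B : Set E} (hB : IsVonNBounded 𝕜 B) : BddAbove (p '' B) := by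
  obtain ⟨r, hr₀, hr⟩ := (hB (p.ball_mem_nhds hp one_pos)).exists_pos
  obtain ⟨c, hc⟩ := NormedField.exists_lt_norm 𝕜 r
  have hBc : B ⊆ p.ball 0 ‖c‖ := by
    simpa [p.smul_ball_zero (norm_pos_iff.mp (hr₀.trans hc))] using hr c hc.le
  exact ⟨‖c‖, by rintro _ ⟨x, hx, rfl⟩; exact (p.mem_ball_zero.mp (hBc hx)).le⟩

theorem Seminorm.exists_bound_of_isVonNBounded_of_forall_bddAbove {𝕜 E κ : Type*}
    [NontriviallyNormedField 𝕜] [AddCommGroup E] [Module 𝕜 E] [TopologicalSpace E]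
    [BarrelledSpace 𝕜 E] {p : κ → Seminorm 𝕜 E} (hp : ∀ k, Continuous (p k))
    (hbdd : ∀ x, BddAbove (Set.range fun k => p k x)) {B : Set E} (hB : IsVonNBounded 𝕜 B) :
    ∃ C, ∀ k, ∀ x ∈ B, p k x ≤ C := by
  have hP : BddAbove (Set.range p) := Seminorm.bddAbove_range_iff.mpr hbdd
  have hsup : Continuous ⇑(⨆ k, p k : Seminorm 𝕜 E) := by
    rw [Seminorm.coe_iSup_eq hP]; exact Seminorm.continuous_iSup p hp hP
  obtain ⟨C, hC⟩ := Seminorm.bddAbove_image_of_isVonNBounded hsup hB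
  refine ⟨C, fun k x hx => ?_⟩
  calc p k x ≤ (⨆ k, p k) x := by
        rw [Seminorm.iSup_apply hP]; exact le_ciSup (hbdd x) k
    _ ≤ C := hC ⟨x, hx, rfl⟩

theorem statement11_general {X : Type*} [AddCommGroup X] [Module ℝ X] [TopologicalSpace X]
    [BarrelledSpace ℝ X]
    {ι : Type*} (Γ : ι → Seminorm ℝ X) (hΓ : WithSeminorms Γ)
    (T : ℝ → X →L[ℝ] X)
    (hTc : ∀ x : X, ContinuousOn (fun t : ℝ => T t x) (Set.Ici 0))
    (hconv : ∀ B : Set X, IsVonNBounded ℝ B → ∀ i : ι, ∀ ε > (0:ℝ),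
      ∃ t₀ : ℝ, ∀ t ≥ t₀, ∀ x ∈ B, Γ i (T t x) ≤ ε) :
    ∀ B : Set X, IsVonNBounded ℝ B → ∀ i : ι, ∃ C : ℝ, 0 ≤ C ∧
      ∀ t : ℝ, 0 ≤ t → ∀ x ∈ B, Γ i (T t x) ≤ C := by
  intro B hB i
  obtain ⟨t₀, ht₀⟩ := hconv B hB i 1 one_pos
  have hbdd (x : X) : BddAbove (Set.range fun t : Set.Icc 0 t₀ => Γ i (T t x)) := by
    have := (isCompact_Icc (a := 0) (b := t₀)).bddAbove_image <|
      (hΓ.continuous_seminorm i).comp_continuousOn ((hTc x).mono Set.Icc_subset_Ici_self)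
    rwa [Set.image_eq_range] at this
  obtain ⟨C, hC⟩ := Seminorm.exists_bound_of_isVonNBounded_of_forall_bddAbove
    (p := fun t : Set.Icc 0 t₀ => (Γ i).comp (T t).toLinearMap)
    (fun t => (hΓ.continuous_seminorm i).comp (T t).continuous) hbdd hB
  refine ⟨max C 1, zero_le_one.trans (le_max_right _ _), fun t ht x hx => ?_⟩
  rcases le_total t₀ t with h | h
  · exact (ht₀ t h x hx).trans (le_max_right _ _)
  · exact (hC ⟨t, ht, h⟩ x hx).trans (le_max_left _ _)

/-- Observation 3.2: A `C₀`-semigroup on a barrelled Hausdorff locally convex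
space which tends to `0` uniformly on bounded sets is bounded. -/
theorem statement11 {X : Type*} [AddCommGroup X] [Module ℝ X] [TopologicalSpace X]
    [T2Space X] [BarrelledSpace ℝ X]
    {ι : Type*} [Nonempty ι] (Γ : ι → Seminorm ℝ X) (hΓ : WithSeminorms Γ)
    (T : ℝ → X →L[ℝ] X)
    (hT0 : T 0 = ContinuousLinearMap.id ℝ X)
    (hTsg : ∀ s t : ℝ, 0 ≤ s → 0 ≤ t → T (s + t) = (T s).comp (T t))
    (hTc : ∀ x : X, ContinuousOn (fun t : ℝ => T t x) (Set.Ici 0))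
    (hconv : ∀ B : Set X, IsVonNBounded ℝ B → ∀ i : ι, ∀ ε > (0:ℝ),
      ∃ t₀ : ℝ, ∀ t ≥ t₀, ∀ x ∈ B, Γ i (T t x) ≤ ε) :
    ∀ B : Set X, IsVonNBounded ℝ B → ∀ i : ι, ∃ C : ℝ, 0 ≤ C ∧
      ∀ t : ℝ, 0 ≤ t → ∀ x ∈ B, Γ i (T t x) ≤ C :=
  statement11_general Γ hΓ T hTc hconv
end
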